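/- Let T be the complete q-ary tree of depth d (q ≥ 2, d ≥ 1). For every S ⊆ V(T) there exists a down-compressed set S' ⊆ V(T) with |S'| = |S| and |δ(S')| ≤ |δ(S)|. -/

import Mathlib

open scoped Classical

/-- A vertex of the complete `q`-ary tree of depth `d`: a sequence over `Fin q`
of length at most `d`. -/
def QV (q d : ℕ) : Type := {l : List (Fin q) // l.length ≤ d}

instance (q d : ℕ) : Finite (QV q d) :=
  (List.finite_length_le (Fin q) d).to_subtype

/-- The complete `q`-ary tree of depth `d`: two vertices are adjacent exactly when
one is obtained from the other by appending a single element. -/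
def qTree (q d : ℕ) : SimpleGraph (QV q d) where
  Adj u v := (∃ a : Fin q, v.val = u.val ++ [a]) ∨ (∃ a : Fin q, u.val = v.val ++ [a])
  symm := ⟨by intro u v h; tauto⟩
  loopless := by
    refine ⟨?_⟩
    rintro u (⟨a, ha⟩ | ⟨a, ha⟩) <;>
    · have := congrArg List.length ha
      simp at this

/-- The vertex border `δ(S)`: vertices outside `S` with a neighbour in `S`. -/
def vertexBorder {V : Type*} (G : SimpleGraph V) (S : Set V) : Set V :=
  {v | v ∉ S ∧ ∃ u ∈ S, G.Adj u v}

/-- `Φ_V(G, s)`: the minimum border size over vertex sets of size `s`. -/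
noncomputable def isoProfile {V : Type*} (G : SimpleGraph V) (s : ℕ) : ℕ :=
  sInf ((fun S => (vertexBorder G S).ncard) '' {S : Set V | S.ncard = s})

/-- `Φ_V(G)`: the vertex-isoperimetric peak, `max_{0 ≤ s ≤ |V|} Φ_V(G, s)`. -/
noncomputable def isoPeak {V : Type*} (G : SimpleGraph V) : ℕ :=
  sSup (isoProfile G '' Set.Icc 0 (Nat.card V))

/-- The vertex separation number: for each linear layout (a bijection from the
vertices to `{1, …, |V|}`, here modelled as `V ≃ Fin |V|`) take the maximum
border size of its prefix sets, then minimize over layouts. -/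
noncomputable def vsNum {V : Type*} (G : SimpleGraph V) : ℕ :=
  sInf {n | ∃ L : V ≃ Fin (Nat.card V),
    n = sSup {m | ∃ i : Fin (Nat.card V),
      m = (vertexBorder G {u | (L u : ℕ) ≤ (i : ℕ)}).ncard}}

namespace QV

variable {q d : ℕ}

/-- Level `i`: vertices at distance `i` from the root. -/
def level (q d : ℕ) (i : ℕ) : Set (QV q d) := {w | w.val.length = i}

/-- Descendants of `u` (including `u` itself). -/
def desc (u : QV q d) : Set (QV q d) := {w | u.val <+: w.val}

/-- `w` is a child of `u`. -/
def IsChildOf (w u : QV q d) : Prop := ∃ a : Fin q, w.val = u.val ++ [a]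

/-- `u` is to the left of `v`: same level and lexicographically smaller. -/
def LeftOf (u v : QV q d) : Prop :=
  u.val.length = v.val.length ∧ List.Lex (· < ·) u.val v.val

/-- `u` precedes `v` in the breadth-first ordering of the tree. -/
def Precedes (u v : QV q d) : Prop :=
  u.val.length < v.val.length ∨
    (u.val.length = v.val.length ∧ List.Lex (· < ·) u.val v.val)

/-- `u, v` are swappable in `S`. -/
def Swappable (S : Set (QV q d)) (u v : QV q d) : Prop :=
  LeftOf u v ∧ ((u ∉ S ∧ v ∈ S) ∨
    (u ∉ S ∧ v ∉ S ∧ (∀ w, IsChildOf w u → w ∉ S) ∧ (∃ w, IsChildOf w v ∧ w ∈ S)))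

/-- Level `i` of `S` is left-ordered: no swappable pair in level `i`. -/
def LevelLeftOrdered (S : Set (QV q d)) (i : ℕ) : Prop :=
  ∀ u v : QV q d, u.val.length = i → ¬ Swappable S u v

/-- `S` is left-ordered: every level is left-ordered. -/
def LeftOrdered (S : Set (QV q d)) : Prop := ∀ i, LevelLeftOrdered S i

/-- The canonical map used in a treeswap between `u` and `v`: a descendant of `u`
is sent to the corresponding descendant of `v` (same suffix), and vice versa;
other vertices are fixed. -/
noncomputable def swapAt (u v w : QV q d) : QV q d :=
  if h : u.val <+: w.val ∧ (v.val ++ w.val.drop u.val.length).length ≤ d then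
    ⟨v.val ++ w.val.drop u.val.length, h.2⟩
  else if h' : v.val <+: w.val ∧ (u.val ++ w.val.drop v.val.length).length ≤ d then
    ⟨u.val ++ w.val.drop v.val.length, h'.2⟩
  else w

/-- The treeswap of `S` between `u` and `v`. -/
noncomputable def treeswap (S : Set (QV q d)) (u v : QV q d) : Set (QV q d) :=
  {w | swapAt u v w ∈ S}

/-- The strict partial order `A < B` on subsets of the tree. -/
def SetPrec (A B : Set (QV q d)) : Prop :=
  (∀ i, (A ∩ level q d i).ncard = (B ∩ level q d i).ncard) ∧
  ∃ v, v ∈ A ∧ v ∉ B ∧ ∀ w, Precedes w v → (w ∈ A ↔ w ∈ B)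

/-- `S` is down-compressed. -/
def DownCompressed (S : Set (QV q d)) : Prop :=
  ∀ u ∈ S, ∀ v ∉ S,
    (vertexBorder (qTree q d) S).ncard ≤
      (vertexBorder (qTree q d) ((S ∪ {v}) \ {u})).ncard ∧
    (u.val.length < v.val.length →
      (vertexBorder (qTree q d) S).ncard <
        (vertexBorder (qTree q d) ((S ∪ {v}) \ {u})).ncard)

/-- `S'` is an aeolian compression of `S`. -/
def IsAeolianCompression (S S' : Set (QV q d)) : Prop :=
  ∃ u v : QV q d, LeftOf u v ∧
    ∃ R A : Set (QV q d), R.Nonempty ∧ R ⊆ S ∧ R ⊆ desc v ∧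
      A ⊆ desc u ∧ Disjoint A S ∧ A.ncard = R.ncard ∧
      S' = (S \ R) ∪ A ∧
      S'.ncard = S.ncard ∧
      (vertexBorder (qTree q d) S').ncard ≤ (vertexBorder (qTree q d) S).ncard

/-- `S` is aeolian-compressed. -/
def AeolianCompressed (S : Set (QV q d)) : Prop :=
  LeftOrdered S ∧ DownCompressed S ∧ ∀ S', ¬ IsAeolianCompression S S'

end QV

/-!
Among all sets of size `|S|`, take one that minimises the border size and, among those, maximises
the total depth `∑_{w ∈ S'} |w|`. Moving a vertex `u ∈ S'` to a vertex `v ∉ S'` keeps the size, so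
it cannot shrink the border; and if `v` is deeper than `u` it raises the total depth, so it must
strictly enlarge the border.
-/

open Set in
theorem finsum_mem_exchange' {α M : Type*} [AddCommMonoid M] (f : α → M) {s : Set α}
    (hs : s.Finite) {a b : α} (ha : a ∉ s) (hb : b ∈ s) :
    (∑ᶠ i ∈ insert a s \ {b}, f i) + f b = (∑ᶠ i ∈ s, f i) + f a := by
  have hs' : (s \ {b}).Finite := hs.sdiff
  rw [← insert_sdiff_singleton_comm (ne_of_mem_of_not_mem hb ha).symm,
    finsum_mem_insert f (fun h => ha h.1) hs']
  conv_rhs => rw [← insert_sdiff_self_of_mem hb, finsum_mem_insert f (fun h => h.2 rfl) hs']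
  abel

namespace QV

variable {q d : ℕ}

noncomputable def depthSum (S : Set (QV q d)) : ℕ := ∑ᶠ w ∈ S, w.val.length

noncomputable def borderDepthRank (S : Set (QV q d)) : ℕ ×ₗ ℕᵒᵈ :=
  toLex ((vertexBorder (qTree q d) S).ncard, OrderDual.toDual (depthSum S))

theorem downCompressed_of_isMinOn {S : Set (QV q d)}
    (hS : IsMinOn borderDepthRank {T | T.ncard = S.ncard} S) : DownCompressed S := by
  intro u hu v hv
  rw [Set.union_singleton]
  have hrank := hS (Set.ncard_exchange' hv hu)
  have hdepth : depthSum (insert v S \ {u}) + u.val.length = depthSum S + v.val.length :=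
    finsum_mem_exchange' _ S.toFinite hv hu
  rcases Prod.Lex.toLex_le_toLex.1 hrank with hlt | ⟨heq, hle⟩
  · exact ⟨hlt.le, fun _ => hlt⟩
  · refine ⟨heq.le, fun hdeeper => absurd (OrderDual.toDual_le_toDual.1 hle) ?_⟩
    omega

end QV

theorem exists_down_compressed_compression_general (q d : ℕ)
    (S : Set (QV q d)) :
    ∃ S' : Set (QV q d), QV.DownCompressed S' ∧ S'.ncard = S.ncard ∧
      (vertexBorder (qTree q d) S').ncard ≤ (vertexBorder (qTree q d) S).ncard := by
  obtain ⟨S', hcard, hmin⟩ :=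
    Set.exists_min_image {T : Set (QV q d) | T.ncard = S.ncard} QV.borderDepthRank
      (Set.toFinite _) ⟨S, rfl⟩
  refine ⟨S', QV.downCompressed_of_isMinOn ?_, hcard, Prod.Lex.monotone_fst _ _ (hmin S rfl)⟩
  rw [hcard]
  exact hmin

theorem exists_down_compressed_compression (q d : ℕ) (hq : 2 ≤ q) (hd : 1 ≤ d)
    (S : Set (QV q d)) :
    ∃ S' : Set (QV q d), QV.DownCompressed S' ∧ S'.ncard = S.ncard ∧
      (vertexBorder (qTree q d) S').ncard ≤ (vertexBorder (qTree q d) S).ncard :=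
  exists_down_compressed_compression_general q d S
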